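/- Fix θ > 0, integers J, K ≥ 1, a map σ : {1,…,J} → {1,…,K}, and m ∈ ℕ^J with merged vector m̃ ∈ ℕ^K given by m̃_k := ∑_{j : σ(j)=k} m_j. Then for every n ∈ ℕ^K with n ≤ m̃ and every t ≥ 0: ∑_{i ∈ ℕ^J : i ≤ m, ĩ = n} p_{m, m−i}(t) = p_{m̃, m̃−n}(t), where ĩ ∈ ℕ^K denotes the merging of i by σ and p_{·,·}(t) are the explicit death-process transition coefficients. That is, the mixture weights appearing in the prediction step of Theorem 3.3 are consistent under fragmentation and merging of classes, so the operations of projection and time-propagation commute. -/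
import Mathlib


open Finset

/-- The death-process rates `λₙ = n(θ + n - 1)/2`. -/
noncomputable def lam (θ : ℝ) (n : ℕ) : ℝ := n * (θ + n - 1) / 2

/-- The coefficient `C_{M, M - i}(t)`. -/
noncomputable def Ccoef (θ : ℝ) (M i : ℕ) (t : ℝ) : ℝ :=
  (-1 : ℝ) ^ i * ∑ k ∈ Finset.range (i + 1),
    Real.exp (-(lam θ (M - k)) * t) /
      ∏ h ∈ (Finset.range (i + 1)).erase k, (lam θ (M - k) - lam θ (M - h))

/-- The multivariate hypergeometric weight `p(i; m, |i|)`. -/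
noncomputable def hyp {K : ℕ} (m i : Fin K → ℕ) : ℝ :=
  ((∑ j, m j).choose (∑ j, i j) : ℝ)⁻¹ * ∏ j, ((m j).choose (i j) : ℝ)

/-- The explicit death-process transition coefficient `p_{m, m - i}(t)`. -/
noncomputable def pcoef (θ : ℝ) {K : ℕ} (m i : Fin K → ℕ) (t : ℝ) : ℝ :=
  if i = 0 then Real.exp (-(lam θ (∑ j, m j)) * t)
  else Ccoef θ (∑ j, m j) (∑ j, i j) t *
    (∏ h ∈ Finset.range (∑ j, i j), lam θ ((∑ j, m j) - h)) * hyp m i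

/-- Generalized Vandermonde identity. -/
lemma vand {ι : Type*} [DecidableEq ι] (s : Finset ι) (m : ι → ℕ) (N : ℕ) :
    ∑ f ∈ s.piAntidiag N, ∏ j ∈ s, (m j).choose (f j) = (∑ j ∈ s, m j).choose N := by
  induction s using Finset.cons_induction generalizing N with
  | empty =>
    rcases eq_or_ne N 0 with rfl | h
    · simp
    · rw [Finset.piAntidiag_empty_of_ne_zero h, Finset.sum_empty, Finset.sum_empty,
        Nat.choose_eq_zero_of_lt (Nat.pos_of_ne_zero h)]
  | cons a s ha ih =>
    rw [Finset.piAntidiag_cons ha, Finset.sum_disjiUnion, Finset.sum_cons, Nat.add_choose_eq]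
    refine Finset.sum_congr rfl fun p hp => ?_
    rw [Finset.sum_map]
    have key : ∀ f ∈ s.piAntidiag p.2,
        ∏ j ∈ Finset.cons a s ha,
          (m j).choose ((addRightEmbedding fun t => if t = a then p.1 else 0) f j)
          = (m a).choose p.1 * ∏ j ∈ s, (m j).choose (f j) := by
      intro f hf
      rw [Finset.prod_cons]
      simp only [Finset.mem_piAntidiag] at hf
      have hfa : f a = 0 := by
        by_contra h; exact ha (hf.2 a h)
      congr 1
      · simp [addRightEmbedding_apply, hfa]
      · refine Finset.prod_congr rfl fun j hj => ?_
        have hja : j ≠ a := fun h => ha (h ▸ hj)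
        simp [addRightEmbedding_apply, hja]
    rw [Finset.sum_congr rfl key, ← Finset.mul_sum, ih]

/-- Multivariate Vandermonde identity for merging classes. -/
lemma merge_choose (J K : ℕ) (σ : Fin J → Fin K) (m : Fin J → ℕ) (n : Fin K → ℕ) :
    ∑ i ∈ (Finset.Iic m).filter
        (fun i => ∀ k, ∑ j ∈ Finset.univ.filter (fun j => σ j = k), i j = n k),
      ∏ j, (m j).choose (i j)
    = ∏ k, ((∑ j ∈ Finset.univ.filter (fun j => σ j = k), m j).choose (n k)) := by
  classical
  -- enlarge the index set, dropping the `i ≤ m` constraint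
  set S := (Finset.piAntidiag (Finset.univ : Finset (Fin J)) (∑ k, n k)).filter
      (fun i => ∀ k, ∑ j ∈ Finset.univ.filter (fun j => σ j = k), i j = n k) with hS
  have hsub : (Finset.Iic m).filter
      (fun i => ∀ k, ∑ j ∈ Finset.univ.filter (fun j => σ j = k), i j = n k) ⊆ S := by
    intro i hi
    rw [Finset.mem_filter] at hi ⊢
    refine ⟨?_, hi.2⟩
    rw [Finset.mem_piAntidiag]
    refine ⟨?_, fun j _ => Finset.mem_univ j⟩
    rw [← Finset.sum_fiberwise Finset.univ σ i]
    exact Finset.sum_congr rfl fun k _ => hi.2 k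
  have hzero : ∀ i ∈ S, i ∉ (Finset.Iic m).filter
      (fun i => ∀ k, ∑ j ∈ Finset.univ.filter (fun j => σ j = k), i j = n k) →
      ∏ j, (m j).choose (i j) = 0 := by
    intro i hiS hi
    rw [hS, Finset.mem_filter] at hiS
    have : i ∉ Finset.Iic m := by
      intro h
      exact hi (Finset.mem_filter.2 ⟨h, hiS.2⟩)
    rw [Finset.mem_Iic] at this
    obtain ⟨j, hj⟩ := not_forall.1 fun h => this h
    have : m j < i j := lt_of_not_ge hj
    exact Finset.prod_eq_zero (Finset.mem_univ j) (Nat.choose_eq_zero_of_lt this)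
  rw [Finset.sum_subset hsub (fun i h₁ h₂ => hzero i h₁ h₂)]
  -- rewrite the RHS via `vand` and `prod_sum`
  have hvand : ∀ k : Fin K,
      ((∑ j ∈ Finset.univ.filter (fun j => σ j = k), m j).choose (n k))
        = ∑ f ∈ (Finset.univ.filter (fun j => σ j = k)).piAntidiag (n k),
            ∏ j ∈ Finset.univ.filter (fun j => σ j = k), (m j).choose (f j) :=
    fun k => (vand _ m (n k)).symm
  rw [Finset.prod_congr rfl fun k _ => hvand k, Finset.prod_sum]
  -- now a bijection between `S` and the pi-set
  refine Finset.sum_nbij' (fun i => fun k _ => fun j => if σ j = k then i j else 0)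
    (fun p => fun j => p (σ j) (Finset.mem_univ _) j) ?_ ?_ ?_ ?_ ?_
  · intro i hi
    rw [hS, Finset.mem_filter] at hi
    rw [Finset.mem_pi]
    intro k _
    rw [Finset.mem_piAntidiag]
    constructor
    · rw [← hi.2 k]
      refine Finset.sum_congr rfl fun j hj => ?_
      rw [Finset.mem_filter] at hj
      simp [hj.2]
    · intro j hj
      rw [Finset.mem_filter]
      refine ⟨Finset.mem_univ j, ?_⟩
      by_contra h
      simp [h] at hj
  · intro p hp
    rw [Finset.mem_pi] at hp
    have hpk : ∀ k, p k (Finset.mem_univ k) ∈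
        (Finset.univ.filter (fun j => σ j = k)).piAntidiag (n k) := fun k => hp k _
    have hcond : ∀ k, ∑ j ∈ Finset.univ.filter (fun j => σ j = k),
        p (σ j) (Finset.mem_univ _) j = n k := by
      intro k
      have hk := hpk k
      rw [Finset.mem_piAntidiag] at hk
      rw [← hk.1]
      refine Finset.sum_congr rfl fun j hj => ?_
      have hjk : σ j = k := (Finset.mem_filter.1 hj).2
      rw [hjk]
    rw [hS, Finset.mem_filter]
    refine ⟨?_, hcond⟩
    rw [Finset.mem_piAntidiag]
    refine ⟨?_, fun j _ => Finset.mem_univ j⟩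
    rw [← Finset.sum_fiberwise Finset.univ σ (fun j => p (σ j) (Finset.mem_univ _) j)]
    exact Finset.sum_congr rfl fun k _ => hcond k
  · intro i hi
    funext j
    simp
  · intro p hp
    rw [Finset.mem_pi] at hp
    funext k hk j
    by_cases h : σ j = k
    · simp only [h, if_pos]
    · simp only [h, if_neg, if_false]
      have hk' := hp k hk
      rw [Finset.mem_piAntidiag] at hk'
      by_contra h0
      have := hk'.2 j (fun hc => h0 hc.symm)
      rw [Finset.mem_filter] at this
      exact h this.2
  · intro i hi
    rw [← Finset.prod_fiberwise Finset.univ σ (fun j => (m j).choose (i j)),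
      ← Finset.prod_attach Finset.univ
        (fun k => ∏ j ∈ Finset.univ.filter (fun j => σ j = k), (m j).choose (i j))]
    refine Finset.prod_congr rfl fun k _ => Finset.prod_congr rfl fun j hj => ?_
    rw [Finset.mem_filter] at hj
    simp [hj.2]

/-- Consistency of the death-process transition coefficients under fragmentation and merging
of classes: projection and time-propagation commute (proof of Theorem 3.3). -/
theorem stmt3 (θ : ℝ) (hθ : 0 < θ) (J K : ℕ) (hJ : 1 ≤ J) (hK : 1 ≤ K)
    (σ : Fin J → Fin K) (m : Fin J → ℕ) (n : Fin K → ℕ)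
    (hn : ∀ k, n k ≤ ∑ j ∈ Finset.univ.filter (fun j => σ j = k), m j)
    (t : ℝ) (ht : 0 ≤ t) :
    ∑ i ∈ (Finset.Iic m).filter
        (fun i => ∀ k, ∑ j ∈ Finset.univ.filter (fun j => σ j = k), i j = n k),
      pcoef θ m i t
    = pcoef θ (fun k => ∑ j ∈ Finset.univ.filter (fun j => σ j = k), m j) n t := by
  classical
  have hM : ∑ k, (∑ j ∈ Finset.univ.filter (fun j => σ j = k), m j) = ∑ j, m j :=
    Finset.sum_fiberwise Finset.univ σ m
  set A := (Finset.Iic m).filter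
      (fun i => ∀ k, ∑ j ∈ Finset.univ.filter (fun j => σ j = k), i j = n k) with hA
  rcases eq_or_ne n 0 with rfl | hn0
  · -- n = 0 case
    have hA0 : A = {0} := by
      ext i
      rw [hA, Finset.mem_filter, Finset.mem_singleton]
      constructor
      · rintro ⟨_, h2⟩
        have hsum : ∑ j, i j = 0 := by
          rw [← Finset.sum_fiberwise Finset.univ σ i]
          exact Finset.sum_eq_zero fun k _ => h2 k
        funext j
        exact (Finset.sum_eq_zero_iff.1 hsum) j (Finset.mem_univ j)
      · rintro rfl
        exact ⟨Finset.mem_Iic.2 (fun j => Nat.zero_le _), fun k => by simp⟩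
    rw [hA0, Finset.sum_singleton]
    simp only [pcoef, if_pos rfl, hM]
    simp
  · -- n ≠ 0 case
    have hNpos : 0 < ∑ k, n k := by
      rcases Function.ne_iff.1 hn0 with ⟨k, hk⟩
      exact Finset.sum_pos' (fun _ _ => Nat.zero_le _)
        ⟨k, Finset.mem_univ k, Nat.pos_of_ne_zero hk⟩
    have hsumi : ∀ i ∈ A, ∑ j, i j = ∑ k, n k := by
      intro i hi
      rw [hA, Finset.mem_filter] at hi
      rw [← Finset.sum_fiberwise Finset.univ σ i]
      exact Finset.sum_congr rfl fun k _ => hi.2 k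
    have hine : ∀ i ∈ A, i ≠ 0 := by
      intro i hi h0
      rw [h0] at hi
      have := hsumi 0 hi
      simp at this
      omega
    -- rewrite each term
    have hterm : ∀ i ∈ A, pcoef θ m i t =
        (Ccoef θ (∑ j, m j) (∑ k, n k) t *
          ∏ h ∈ Finset.range (∑ k, n k), lam θ ((∑ j, m j) - h)) *
        (((∑ j, m j).choose (∑ k, n k) : ℝ)⁻¹ * ∏ j, ((m j).choose (i j) : ℝ)) := by
      intro i hi
      rw [pcoef, if_neg (hine i hi), hyp, hsumi i hi, mul_assoc]
    rw [Finset.sum_congr rfl hterm, ← Finset.mul_sum]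
    have hmerge : ∑ i ∈ A, ∏ j, ((m j).choose (i j) : ℝ)
        = ∏ k, (((∑ j ∈ Finset.univ.filter (fun j => σ j = k), m j).choose (n k) : ℝ)) := by
      have := merge_choose J K σ m n
      calc ∑ i ∈ A, ∏ j, ((m j).choose (i j) : ℝ)
          = ((∑ i ∈ A, ∏ j, (m j).choose (i j) : ℕ) : ℝ) := by push_cast; rfl
        _ = _ := by rw [this]; push_cast; rfl
    rw [← Finset.mul_sum, hmerge]
    have hne : n ≠ 0 := hn0
    rw [pcoef, if_neg hne, hyp, hM, mul_assoc]
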